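/- In Example 1, the concavification of φ* over [0,1] is the constant function 4; precisely: (i) φ*(ν) ≤ 4 for every ν ∈ [0,1]; and (ii) every function g : [0,1] → ℝ that is concave on [0,1] and satisfies g(ν) ≥ φ*(ν) for all ν ∈ [0,1] must satisfy g(ν) ≥ 4 for all ν ∈ [0,1]. -/
import Mathlib


/-- Example 1 best-response target function:
`φ*(ν) = min_{x ∈ [0,1]} max{5 − x − ν(5 − 4x), 3x + ν(5 − 4x)}`. -/
noncomputable def phiStarEx1 (ν : ℝ) : ℝ :=
  sInf ((fun x => max (5 - x - ν * (5 - 4 * x)) (3 * x + ν * (5 - 4 * x))) '' Set.Icc (0 : ℝ) 1)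

lemma phiBdd (ν : ℝ) : BddBelow
    ((fun x => max (5 - x - ν * (5 - 4 * x)) (3 * x + ν * (5 - 4 * x))) '' Set.Icc (0 : ℝ) 1) := by
  refine ⟨5 / 2, ?_⟩
  rintro y ⟨x, hx, rfl⟩
  have h1 := le_max_left (5 - x - ν * (5 - 4 * x)) (3 * x + ν * (5 - 4 * x))
  have h2 := le_max_right (5 - x - ν * (5 - 4 * x)) (3 * x + ν * (5 - 4 * x))
  have hx0 := hx.1
  simp only
  linarith

lemma phiLe (ν : ℝ) (hν : ν ∈ Set.Icc (0 : ℝ) 1) : phiStarEx1 ν ≤ 4 := by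
  have h : phiStarEx1 ν ≤ max (5 - 1 - ν * (5 - 4 * 1)) (3 * 1 + ν * (5 - 4 * 1)) :=
    csInf_le (phiBdd ν) ⟨1, by norm_num, rfl⟩
  refine h.trans (max_le ?_ ?_) <;> nlinarith [hν.1, hν.2]

lemma phiGe (ν : ℝ) (hν : ν = 0 ∨ ν = 1) : 4 ≤ phiStarEx1 ν := by
  refine le_csInf ⟨_, ⟨1, by norm_num, rfl⟩⟩ ?_
  rintro y ⟨x, hx, rfl⟩
  have h1 := le_max_left (5 - x - ν * (5 - 4 * x)) (3 * x + ν * (5 - 4 * x))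
  have h2 := le_max_right (5 - x - ν * (5 - 4 * x)) (3 * x + ν * (5 - 4 * x))
  rcases hν with rfl | rfl <;> simp only <;> nlinarith [hx.1, hx.2]

/-- in Example 1 the concavification of `φ*` over `[0,1]` is the constant `4`:
(i) `φ* ≤ 4` on `[0,1]`; (ii) any concave function on `[0,1]` majorizing `φ*` is at least `4`
everywhere on `[0,1]`. -/
theorem stmt11 :
    (∀ ν ∈ Set.Icc (0 : ℝ) 1, phiStarEx1 ν ≤ 4) ∧
    (∀ g : ℝ → ℝ, ConcaveOn ℝ (Set.Icc (0 : ℝ) 1) g →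
      (∀ ν ∈ Set.Icc (0 : ℝ) 1, phiStarEx1 ν ≤ g ν) →
      ∀ ν ∈ Set.Icc (0 : ℝ) 1, 4 ≤ g ν) := by
  constructor
  · exact fun ν hν => phiLe ν hν
  · intro g hg hge ν hν
    have h0 : (0 : ℝ) ∈ Set.Icc (0 : ℝ) 1 := by norm_num
    have h1 : (1 : ℝ) ∈ Set.Icc (0 : ℝ) 1 := by norm_num
    have hg0 : 4 ≤ g 0 := le_trans (phiGe 0 (Or.inl rfl)) (hge 0 h0)
    have hg1 : 4 ≤ g 1 := le_trans (phiGe 1 (Or.inr rfl)) (hge 1 h1)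
    have hc := hg.2 h0 h1 (sub_nonneg.2 hν.2) hν.1 (by ring)
    simp only [smul_eq_mul, mul_zero, mul_one, add_zero, zero_add] at hc
    nlinarith [hν.1, hν.2]
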